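/- Let H be holomorphic on a neighborhood of ∞ in the closed upper half-plane, with asymptotic expansion H(w) = c·w^n + O(w^{n−1}) as |w| → ∞, where c is a nonzero real constant and n ≥ 2 an integer. Then Im H takes both positive and negative values on the part of the upper half-plane outside any sufficiently large disk. -/

import Mathlib

/-! On the circle `|w| = s` the leading term satisfies `Im (c w^n) = c sⁿ sin (nθ)` at
`w = s e^{iθ}`, and for `n ≥ 2` both `sin (nθ) = 1` and `sin (nθ) = -1` are attained with
`θ ∈ (0, π)`. There `|Im (c w^n)| = |c| sⁿ`, which beats the error `C sⁿ⁻¹` once `s > |C| / |c|`. -/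

open Real Set Complex

lemma exists_mem_Ioo_sin_nat_mul_eq {n : ℕ} (hn : 2 ≤ n) {t : ℝ} (ht : t ∈ Icc (-1) 1) :
    ∃ θ ∈ Ioo 0 π, Real.sin (n * θ) = t := by
  have hn' : (2 : ℝ) ≤ n := by exact_mod_cast hn
  have h₁ := neg_pi_div_two_le_arcsin t
  have h₂ := arcsin_le_pi_div_two t
  -- `π - arcsin t ∈ [π/2, 3π/2]`, which lies in `(0, nπ)` since `n ≥ 2`
  refine ⟨(π - arcsin t) / n, ⟨by apply div_pos <;> linarith [pi_pos], ?_⟩, ?_⟩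
  · rw [div_lt_iff₀ (by linarith)]
    nlinarith [pi_pos]
  · rw [mul_div_cancel₀ _ (by positivity), Real.sin_pi_sub, sin_arcsin ht.1 ht.2]

lemma im_ofReal_mul_exp_mul_I (s θ : ℝ) : ((s : ℂ) * exp (θ * I)).im = s * Real.sin θ := by
  rw [im_ofReal_mul, exp_ofReal_mul_I_im]

lemma norm_ofReal_mul_exp_mul_I {s : ℝ} (hs : 0 ≤ s) (θ : ℝ) : ‖(s : ℂ) * exp (θ * I)‖ = s := by
  rw [norm_mul, norm_exp_ofReal_mul_I, mul_one, norm_real, Real.norm_of_nonneg hs]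

lemma im_ofReal_mul_pow_ofReal_mul_exp_mul_I (c s θ : ℝ) (n : ℕ) :
    ((c : ℂ) * ((s : ℂ) * exp (θ * I)) ^ n).im = c * s ^ n * Real.sin (n * θ) := by
  have hpow : ((s : ℂ) * exp (θ * I)) ^ n = ((s ^ n : ℝ) : ℂ) * exp ((n * θ : ℝ) * I) := by
    rw [mul_pow, ← Complex.exp_nat_mul]
    push_cast
    ring_nf
  rw [hpow, im_ofReal_mul, im_ofReal_mul_exp_mul_I]
  ring

lemma pos_im_of_norm_sub_le {z u : ℂ} {ε : ℝ} (hz : ‖z - u‖ ≤ ε) (hu : ε < u.im) : 0 < z.im := by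
  have hdev := (abs_le.mp ((abs_im_le_norm (z - u)).trans hz)).1
  rw [sub_im] at hdev
  linarith

lemma exists_norm_eq_pos_mul_im_of_dominant_pow (H : ℂ → ℂ) {c C s R₁ : ℝ} {n : ℕ} (hn : 2 ≤ n)
    (hc : c ≠ 0) (hR₁s : R₁ < s) (hCs : |C| / |c| < s)
    (hbound : ∀ w : ℂ, 0 ≤ w.im → R₁ < ‖w‖ → ‖H w - (c : ℂ) * w ^ n‖ ≤ C * ‖w‖ ^ (n - 1))
    {σ : ℝ} (hσ : σ = 1 ∨ σ = -1) :
    ∃ w : ℂ, 0 < w.im ∧ ‖w‖ = s ∧ 0 < σ * (H w).im := by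
  have hcabs : 0 < |c| := abs_pos.mpr hc
  have hs₀ : 0 < s := lt_of_le_of_lt (by positivity) hCs
  have hσσ : σ ^ 2 = 1 := by rcases hσ with rfl | rfl <;> norm_num
  have hσ' : |σ| = 1 := by rcases hσ with rfl | rfl <;> norm_num
  obtain ⟨θ, ⟨hθ₀, hθπ⟩, hsin⟩ : ∃ θ ∈ Ioo 0 π, Real.sin (n * θ) = σ * c / |c| := by
    refine exists_mem_Ioo_sin_nat_mul_eq hn (abs_le.mp ?_)
    rw [abs_div, abs_mul, hσ', one_mul, abs_abs, div_self hcabs.ne']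
  set w : ℂ := (s : ℂ) * exp (θ * I)
  have hw_norm : ‖w‖ = s := norm_ofReal_mul_exp_mul_I hs₀.le θ
  have hw_im : 0 < w.im := by
    rw [im_ofReal_mul_exp_mul_I]
    exact mul_pos hs₀ (Real.sin_pos_of_pos_of_lt_pi hθ₀ hθπ)
  refine ⟨w, hw_im, hw_norm, ?_⟩
  have herr := hbound w hw_im.le (hw_norm ▸ hR₁s)
  rw [hw_norm] at herr
  have hlead : (((σ * c : ℝ) : ℂ) * w ^ n).im = |c| * s ^ n := by
    rw [im_ofReal_mul_pow_ofReal_mul_exp_mul_I, hsin]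
    field_simp
    rw [hσσ, one_mul, sq_abs]
  have hclose : ‖((σ : ℂ) * H w) - ((σ * c : ℝ) : ℂ) * w ^ n‖ ≤ C * s ^ (n - 1) := by
    rw [ofReal_mul, mul_assoc, ← mul_sub, norm_mul, norm_real, Real.norm_eq_abs, hσ', one_mul]
    exact herr
  have hdominant : C * s ^ (n - 1) < |c| * s ^ n := by
    have hC : C < |c| * s := (le_abs_self C).trans_lt (by rwa [div_lt_iff₀' hcabs] at hCs)
    calc C * s ^ (n - 1) < |c| * s * s ^ (n - 1) := by gcongr
      _ = |c| * s ^ n := by rw [mul_assoc, ← pow_succ', Nat.sub_add_cancel (by omega)]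
  simpa only [im_ofReal_mul] using pos_im_of_norm_sub_le hclose (hlead ▸ hdominant)

theorem stmt_13_general (H : ℂ → ℂ) (c : ℝ) (hc : c ≠ 0) (n : ℕ) (hn : 2 ≤ n) (R : ℝ)
    (hbound : ∃ C R₁ : ℝ, R ≤ R₁ ∧ ∀ w : ℂ, 0 ≤ w.im → R₁ < ‖w‖ →
      ‖H w - (c : ℂ) * w ^ n‖ ≤ C * ‖w‖ ^ (n - 1)) :
    ∃ R₀ : ℝ, R ≤ R₀ ∧ ∀ r : ℝ, R₀ ≤ r →
      ∃ w₁ w₂ : ℂ, 0 < w₁.im ∧ r < ‖w₁‖ ∧ 0 < w₂.im ∧ r < ‖w₂‖ ∧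
        0 < (H w₁).im ∧ (H w₂).im < 0 := by
  obtain ⟨C, R₁, hRR₁, hC⟩ := hbound
  refine ⟨R₁, hRR₁, fun r hr => ?_⟩
  set s := max r (|C| / |c|) + 1
  have hrs : r < s := (le_max_left _ _).trans_lt (lt_add_one _)
  have hCs : |C| / |c| < s := (le_max_right _ _).trans_lt (lt_add_one _)
  have hR₁s : R₁ < s := hr.trans_lt hrs
  obtain ⟨w₁, hw₁, hw₁s, hH₁⟩ :=
    exists_norm_eq_pos_mul_im_of_dominant_pow H hn hc hR₁s hCs hC (Or.inl rfl)
  obtain ⟨w₂, hw₂, hw₂s, hH₂⟩ :=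
    exists_norm_eq_pos_mul_im_of_dominant_pow H hn hc hR₁s hCs hC (Or.inr rfl)
  exact ⟨w₁, w₂, hw₁, hw₁s ▸ hrs, hw₂, hw₂s ▸ hrs, by linarith, by linarith⟩

/-- If `H` is holomorphic on a neighborhood of `∞` in the closed upper half-plane
with `H(w) = c·w^n + O(w^{n−1})` for a nonzero real constant `c` and integer
`n ≥ 2`, then `Im H` takes both positive and negative values on the part of the
upper half-plane outside any sufficiently large disk. -/
theorem stmt_13 (H : ℂ → ℂ) (c : ℝ) (hc : c ≠ 0) (n : ℕ) (hn : 2 ≤ n) (R : ℝ)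
    (hH : DifferentiableOn ℂ H {w : ℂ | 0 ≤ w.im ∧ R < ‖w‖})
    (hbound : ∃ C R₁ : ℝ, R ≤ R₁ ∧ ∀ w : ℂ, 0 ≤ w.im → R₁ < ‖w‖ →
      ‖H w - (c : ℂ) * w ^ n‖ ≤ C * ‖w‖ ^ (n - 1)) :
    ∃ R₀ : ℝ, R ≤ R₀ ∧ ∀ r : ℝ, R₀ ≤ r →
      ∃ w₁ w₂ : ℂ, 0 < w₁.im ∧ r < ‖w₁‖ ∧ 0 < w₂.im ∧ r < ‖w₂‖ ∧
        0 < (H w₁).im ∧ (H w₂).im < 0 :=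
  stmt_13_general H c hc n hn R hbound
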